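/- arXiv:1405.0617 — 3 statements merged into one kernel-verified Lean document; each statement's English description precedes it below -/
import Mathlib

section
/- Let Ω ⊂ ℝⁿ be a star-shaped compact set with smooth boundary, λ_Ω the uniform probability measure on Ω, and σ_{∂Ω} the cone probability measure on ∂Ω (the pushforward of λ_Ω under x ↦ x/‖x‖, where ‖·‖ is the gauge of Ω). Then for every smooth f on Ω: Var_{λ_Ω}(f) ≤ (4/n²) ∫_Ω ⟨x, ∇f⟩² dλ_Ω + 2 Var_{σ_{∂Ω}}(f|_{∂Ω}). -/
open MeasureTheory Metric Set
open scoped RealInnerProductSpace ENNReal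

/-- The Euclidean divergence of a vector field on `ℝⁿ`. -/
noncomputable def vecDiv {n : ℕ} (ξ : EuclideanSpace ℝ (Fin n) → EuclideanSpace ℝ (Fin n))
    (x : EuclideanSpace ℝ (Fin n)) : ℝ :=
  ∑ i, fderiv ℝ ξ x (EuclideanSpace.single i 1) i

/-- The variance of `f` under the measure `μ`. -/
noncomputable def var' {α : Type*} [MeasurableSpace α] (μ : Measure α) (f : α → ℝ) : ℝ :=
  (∫ x, f x ^ 2 ∂μ) - (∫ x, f x ∂μ) ^ 2

open Pointwise Filter
open scoped NNReal

section HardyAux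

variable {n : ℕ} {Ω : Set (EuclideanSpace ℝ (Fin n))}

lemma up (hstar : ∀ x ∈ Ω, ∀ t : ℝ, t ∈ Icc (0 : ℝ) 1 → t • x ∈ Ω)
    {r s : ℝ} (hr : 0 < r) (hrs : r ≤ s) {x : EuclideanSpace ℝ (Fin n)}
    (hx : x ∈ r • Ω) : x ∈ s • Ω := by
  obtain ⟨y, hy, rfl⟩ := hx
  have hs : 0 < s := hr.trans_le hrs
  refine ⟨(s⁻¹ * r) • y, hstar y hy _ ⟨by positivity, ?_⟩, ?_⟩
  · rw [inv_mul_le_iff₀ hs, mul_one]; exact hrs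
  · show s • (s⁻¹ * r) • y = r • y
    rw [smul_smul, ← mul_assoc, mul_inv_cancel₀ hs.ne', one_mul]

lemma absorbentΩ (h0 : (0 : EuclideanSpace ℝ (Fin n)) ∈ interior Ω) : Absorbent ℝ Ω :=
  absorbent_nhds_zero (mem_interior_iff_mem_nhds.1 h0)

lemma boundedΩ (hΩc : IsCompact Ω) : Bornology.IsVonNBounded ℝ Ω := by
  rw [NormedSpace.isVonNBounded_iff]; exact hΩc.isBounded

lemma gauge_pos' (hΩc : IsCompact Ω) (h0 : (0 : EuclideanSpace ℝ (Fin n)) ∈ interior Ω)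
    {x : EuclideanSpace ℝ (Fin n)} (hx : x ≠ 0) : 0 < gauge Ω x :=
  (gauge_pos (absorbentΩ h0) (boundedΩ hΩc)).2 hx

lemma mem_of_gauge_le_one (hΩc : IsCompact Ω)
    (h0 : (0 : EuclideanSpace ℝ (Fin n)) ∈ interior Ω)
    (hstar : ∀ x ∈ Ω, ∀ t : ℝ, t ∈ Icc (0 : ℝ) 1 → t • x ∈ Ω)
    {x : EuclideanSpace ℝ (Fin n)} (hx : gauge Ω x ≤ 1) : x ∈ Ω := by
  have habs := absorbentΩ h0
  -- for each m, x ∈ (1 + 1/(m+1)) • Ω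
  have key : ∀ m : ℕ, (1 + (1:ℝ)/(m+1))⁻¹ • x ∈ Ω := by
    intro m
    have hlt : gauge Ω x < 1 + 1/(m+1) := lt_of_le_of_lt hx (lt_add_of_pos_right _ (by positivity))
    obtain ⟨r, hr0, hrlt, hxr⟩ := exists_lt_of_gauge_lt habs hlt
    have : x ∈ (1 + (1:ℝ)/(m+1)) • Ω := up hstar hr0 hrlt.le hxr
    obtain ⟨y, hy, rfl⟩ := this
    rw [inv_smul_smul₀ (by positivity)]
    exact hy
  have hTend : Filter.Tendsto (fun m : ℕ => (1 + (1:ℝ)/(m+1))⁻¹ • x) Filter.atTop (nhds x) := by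
    have h1 : Filter.Tendsto (fun m : ℕ => (1 + (1:ℝ)/(m+1))⁻¹) Filter.atTop (nhds 1) := by
      have h2 : Filter.Tendsto (fun m : ℕ => (1 + (1:ℝ)/(m+1))) Filter.atTop (nhds 1) := by
        simpa using (tendsto_one_div_add_atTop_nhds_zero_nat.const_add (1:ℝ))
      simpa using h2.inv₀ (by norm_num)
    simpa using h1.smul_const x
  exact hΩc.isClosed.mem_of_tendsto hTend (Filter.Eventually.of_forall key)

lemma mem_iff_gauge_le_one (hΩc : IsCompact Ω)
    (h0 : (0 : EuclideanSpace ℝ (Fin n)) ∈ interior Ω)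
    (hstar : ∀ x ∈ Ω, ∀ t : ℝ, t ∈ Icc (0 : ℝ) 1 → t • x ∈ Ω)
    {x : EuclideanSpace ℝ (Fin n)} : x ∈ Ω ↔ gauge Ω x ≤ 1 :=
  ⟨gauge_le_one_of_mem, mem_of_gauge_le_one hΩc h0 hstar⟩

lemma gauge_measurable (hΩc : IsCompact Ω)
    (h0 : (0 : EuclideanSpace ℝ (Fin n)) ∈ interior Ω)
    (hstar : ∀ x ∈ Ω, ∀ t : ℝ, t ∈ Icc (0 : ℝ) 1 → t • x ∈ Ω) :
    Measurable (gauge Ω) := by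
  have habs : Absorbent ℝ Ω := absorbent_nhds_zero (mem_interior_iff_mem_nhds.1 h0)
  apply measurable_of_Iio
  intro c
  rcases le_or_gt c 0 with hc | hc
  · have : gauge Ω ⁻¹' Iio c = ∅ := by
      ext x
      simp only [mem_preimage, mem_Iio, mem_empty_iff_false, iff_false, not_lt]
      exact hc.trans (gauge_nonneg x)
    rw [this]; exact MeasurableSet.empty
  · have : gauge Ω ⁻¹' Iio c = ⋃ q : {q : ℚ // 0 < (q:ℝ) ∧ (q:ℝ) < c}, ((q:ℝ) : ℝ) • Ω := by
      ext x
      simp only [mem_preimage, mem_Iio, mem_iUnion]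
      constructor
      · intro hx
        obtain ⟨r, hr0, hrc, hxr⟩ := exists_lt_of_gauge_lt habs hx
        obtain ⟨q, hq1, hq2⟩ := exists_rat_btwn hrc
        exact ⟨⟨q, hr0.trans hq1, hq2⟩, up hstar hr0 hq1.le hxr⟩
      · rintro ⟨⟨q, hq0, hqc⟩, hx⟩
        exact (gauge_le_of_mem hq0.le hx).trans_lt hqc
    rw [this]
    exact MeasurableSet.iUnion fun q =>
      ((hΩc.smul ((q : ℚ) : ℝ)).isClosed).measurableSet

-- T commutes with positive scalings

lemma T_smul {c : ℝ} (hc : 0 < c) (x : EuclideanSpace ℝ (Fin n)) :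
    (gauge Ω (c • x))⁻¹ • (c • x) = (gauge Ω x)⁻¹ • x := by
  rw [gauge_smul_of_nonneg hc.le, smul_smul, smul_eq_mul, mul_inv]
  rw [mul_comm c⁻¹ _, mul_assoc, inv_mul_cancel₀ hc.ne', mul_one]

lemma vol_smul (s : ℝ) (A : Set (EuclideanSpace ℝ (Fin n))) (hs : 0 ≤ s) :
    volume (s • A) = ENNReal.ofReal (s ^ n) * volume A := by
  rw [Measure.addHaar_smul volume s A, finrank_euclideanSpace_fin, abs_of_nonneg (by positivity)]

-- the key scaling identity

lemma scale_meas (hΩc : IsCompact Ω) (h0 : (0 : EuclideanSpace ℝ (Fin n)) ∈ interior Ω)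
    (hstar : ∀ x ∈ Ω, ∀ t : ℝ, t ∈ Icc (0 : ℝ) 1 → t • x ∈ Ω)
    (C : Set (EuclideanSpace ℝ (Fin n)))
    (hC : ∀ c : ℝ, 0 < c → ∀ x ∈ C, c • x ∈ C)
    {s : ℝ} (hs0 : 0 < s) :
    volume ({x | gauge Ω x ≤ s} ∩ C) = ENNReal.ofReal (s ^ n) * volume (Ω ∩ C) := by
  have habs : Absorbent ℝ Ω := absorbent_nhds_zero (mem_interior_iff_mem_nhds.1 h0)
  have hfin : volume (Ω ∩ C) < ⊤ :=
    lt_of_le_of_lt (measure_mono inter_subset_left) hΩc.measure_lt_top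
  -- lower bound
  have hlow : s • (Ω ∩ C) ⊆ {x | gauge Ω x ≤ s} ∩ C := by
    rintro _ ⟨y, ⟨hyΩ, hyC⟩, rfl⟩
    refine ⟨?_, hC s hs0 y hyC⟩
    show gauge Ω (s • y) ≤ s
    rw [gauge_smul_of_nonneg hs0.le, smul_eq_mul]
    calc s * gauge Ω y ≤ s * 1 := by
          exact mul_le_mul_of_nonneg_left (gauge_le_one_of_mem hyΩ) hs0.le
      _ = s := mul_one s
  -- upper bound family
  have hup : ∀ s' : ℝ, s < s' → {x | gauge Ω x ≤ s} ∩ C ⊆ s' • (Ω ∩ C) := by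
    intro s' hss'
    have hs' : 0 < s' := hs0.trans hss'
    rintro x ⟨hxg, hxC⟩
    have : gauge Ω x < s' := lt_of_le_of_lt hxg hss'
    obtain ⟨r, hr0, hrs', hxr⟩ := exists_lt_of_gauge_lt habs this
    obtain ⟨y, hy, rfl⟩ := up hstar hr0 hrs'.le hxr
    have hyC : y ∈ C := by
      have h2 := hC s'⁻¹ (by positivity) _ hxC
      rwa [inv_smul_smul₀ hs'.ne'] at h2
    exact ⟨y, ⟨hy, hyC⟩, rfl⟩
  refine le_antisymm ?_ ?_
  · -- squeeze
    have key : ∀ k : ℕ, volume ({x | gauge Ω x ≤ s} ∩ C) ≤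
        ENNReal.ofReal ((s + 1/(k+1)) ^ n) * volume (Ω ∩ C) := by
      intro k
      calc volume ({x | gauge Ω x ≤ s} ∩ C) ≤ volume ((s + 1/(k+1)) • (Ω ∩ C)) :=
            measure_mono (hup _ (lt_add_of_pos_right _ (by positivity)))
        _ = _ := vol_smul _ _ (by positivity)
    have h1 : Tendsto (fun k : ℕ => (s + 1/(k+1)) ^ n) atTop (nhds (s ^ n)) := by
      have : Tendsto (fun k : ℕ => s + 1/(k+1)) atTop (nhds s) := by
        simpa using tendsto_one_div_add_atTop_nhds_zero_nat.const_add s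
      exact this.pow n
    have hT : Tendsto (fun k : ℕ => ENNReal.ofReal ((s + 1/(k+1)) ^ n) * volume (Ω ∩ C)) atTop
        (nhds (ENNReal.ofReal (s ^ n) * volume (Ω ∩ C))) :=
      ENNReal.Tendsto.mul_const (ENNReal.tendsto_ofReal h1) (Or.inr hfin.ne)
    exact ge_of_tendsto hT (Eventually.of_forall key)
  · rw [← vol_smul s _ hs0.le]
    exact measure_mono hlow

lemma vol_single (hn : 0 < n) : volume ({0} : Set (EuclideanSpace ℝ (Fin n))) = 0 := by
  have h : ({0} : Set (EuclideanSpace ℝ (Fin n))) = (0:ℝ) • (univ : Set (EuclideanSpace ℝ (Fin n))) := by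
    rw [zero_smul_set univ_nonempty]; exact Set.singleton_zero.symm
  rw [h, Measure.addHaar_smul volume, finrank_euclideanSpace_fin, zero_pow hn.ne',
    abs_zero, ENNReal.ofReal_zero, zero_mul]

-- independence at the volume level

lemma indep_vol (hn : 0 < n) (hΩc : IsCompact Ω)
    (h0 : (0 : EuclideanSpace ℝ (Fin n)) ∈ interior Ω)
    (hstar : ∀ x ∈ Ω, ∀ t : ℝ, t ∈ Icc (0 : ℝ) 1 → t • x ∈ Ω)
    (B : Set (EuclideanSpace ℝ (Fin n))) (hB : MeasurableSet B)
    (A : Set ℝ) (hA : MeasurableSet A) :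
    volume (gauge Ω ⁻¹' A ∩ ((fun x => (gauge Ω x)⁻¹ • x) ⁻¹' B ∩ Ω)) * volume Ω =
      volume (gauge Ω ⁻¹' A ∩ Ω) * volume ((fun x => (gauge Ω x)⁻¹ • x) ⁻¹' B ∩ Ω) := by
  classical
  set T : EuclideanSpace ℝ (Fin n) → EuclideanSpace ℝ (Fin n) :=
    fun x => (gauge Ω x)⁻¹ • x with hT
  have hgm : Measurable (gauge Ω) := gauge_measurable hΩc h0 hstar
  have hTm : Measurable T := (hgm.inv).smul measurable_id
  have hTB : MeasurableSet (T ⁻¹' B) := hTm hB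
  have hΩm : MeasurableSet Ω := hΩc.isClosed.measurableSet
  have hconeTB : ∀ c : ℝ, 0 < c → ∀ x ∈ T ⁻¹' B, c • x ∈ T ⁻¹' B := by
    intro c hc x hx
    show T (c • x) ∈ B
    rw [hT]; show (gauge Ω (c • x))⁻¹ • (c • x) ∈ B
    rw [T_smul hc]; exact hx
  have hΩfin : volume Ω ≠ ⊤ := hΩc.measure_lt_top.ne
  -- the two finite measures on ℝ
  set m₁ : Measure ℝ := (volume Ω) • Measure.map (gauge Ω) (volume.restrict (T ⁻¹' B ∩ Ω)) with hm₁
  set m₂ : Measure ℝ := (volume (T ⁻¹' B ∩ Ω)) • Measure.map (gauge Ω) (volume.restrict Ω) with hm₂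
  have hfin1 : IsFiniteMeasure m₁ := by
    constructor
    rw [hm₁, Measure.smul_apply, Measure.map_apply hgm MeasurableSet.univ]
    simp only [preimage_univ, Measure.restrict_apply MeasurableSet.univ, univ_inter, smul_eq_mul]
    exact ENNReal.mul_lt_top hΩc.measure_lt_top
      (lt_of_le_of_lt (measure_mono inter_subset_right) hΩc.measure_lt_top)
  have key : ∀ t : ℝ, m₁ (Iic t) = m₂ (Iic t) := by
    intro t
    have e₁ : m₁ (Iic t) = volume Ω * volume ({x | gauge Ω x ≤ t} ∩ (T ⁻¹' B ∩ Ω)) := by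
      rw [hm₁, Measure.smul_apply, Measure.map_apply hgm measurableSet_Iic,
        Measure.restrict_apply (hgm measurableSet_Iic), smul_eq_mul]
      rfl
    have e₂ : m₂ (Iic t) = volume (T ⁻¹' B ∩ Ω) * volume ({x | gauge Ω x ≤ t} ∩ Ω) := by
      rw [hm₂, Measure.smul_apply, Measure.map_apply hgm measurableSet_Iic,
        Measure.restrict_apply (hgm measurableSet_Iic), smul_eq_mul]
      rfl
    rcases le_or_gt t 0 with ht | ht
    · have hsub : ∀ D : Set (EuclideanSpace ℝ (Fin n)),
          {x | gauge Ω x ≤ t} ∩ D ⊆ {(0 : EuclideanSpace ℝ (Fin n))} := by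
        intro D x hx
        simp only [mem_singleton_iff]
        by_contra hne
        exact absurd (hx.1.trans ht) (not_le.2 (gauge_pos' hΩc h0 hne))
      have z1 : volume ({x | gauge Ω x ≤ t} ∩ (T ⁻¹' B ∩ Ω)) = 0 :=
        measure_mono_null (hsub _) (vol_single hn)
      have z2 : volume ({x | gauge Ω x ≤ t} ∩ Ω) = 0 :=
        measure_mono_null (hsub _) (vol_single hn)
      rw [e₁, e₂, z1, z2, mul_zero, mul_zero]
    have hGsub : ∀ u : ℝ, u ≤ 1 → {x | gauge Ω x ≤ u} ⊆ Ω := by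
      intro u hu x hx
      exact (mem_iff_gauge_le_one hΩc h0 hstar).2 (le_trans hx hu)
    rcases le_or_gt t 1 with ht1 | ht1
    · -- main case
      have hTΩ : {x | gauge Ω x ≤ t} ∩ (T ⁻¹' B ∩ Ω) = {x | gauge Ω x ≤ t} ∩ T ⁻¹' B := by
        ext x
        constructor
        · rintro ⟨h1, h2, _⟩; exact ⟨h1, h2⟩
        · rintro ⟨h1, h2⟩; exact ⟨h1, h2, hGsub t ht1 h1⟩
      have hΩ2 : {x | gauge Ω x ≤ t} ∩ Ω = {x | gauge Ω x ≤ t} ∩ (univ : Set (EuclideanSpace ℝ (Fin n))) := by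
        rw [inter_univ]
        exact inter_eq_left.2 (hGsub t ht1)
      rw [e₁, e₂, hTΩ, hΩ2,
        scale_meas hΩc h0 hstar (T ⁻¹' B) hconeTB ht,
        scale_meas hΩc h0 hstar univ (fun c hc x _ => mem_univ _) ht, inter_univ,
        inter_comm Ω (T ⁻¹' B)]
      ring
    · -- t > 1
      have hsup : ∀ D : Set (EuclideanSpace ℝ (Fin n)), D ⊆ Ω →
          {x | gauge Ω x ≤ t} ∩ D = D := by
        intro D hD
        apply inter_eq_right.2
        intro x hx
        exact le_trans ((mem_iff_gauge_le_one hΩc h0 hstar).1 (hD hx)) ht1.le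
      rw [e₁, e₂, hsup _ inter_subset_right, hsup _ (Subset.refl Ω)]
      ring
  have := Measure.ext_of_Iic m₁ m₂ key
  have happ := congrArg (fun m : Measure ℝ => m A) this
  rw [hm₁, hm₂, Measure.smul_apply, Measure.smul_apply,
    Measure.map_apply hgm hA, Measure.map_apply hgm hA,
    Measure.restrict_apply (hgm hA), Measure.restrict_apply (hgm hA), smul_eq_mul, smul_eq_mul] at happ
  rw [mul_comm, happ, mul_comm]

lemma vol_pos_ne (hΩc : IsCompact Ω) (h0 : (0 : EuclideanSpace ℝ (Fin n)) ∈ interior Ω) :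
    volume Ω ≠ 0 ∧ volume Ω ≠ ⊤ := by
  constructor
  · intro h
    have h2 : volume (interior Ω) = 0 := measure_mono_null interior_subset h
    have h3 : (interior Ω).Nonempty := ⟨0, h0⟩
    exact absurd h2 (IsOpen.measure_ne_zero _ isOpen_interior h3)
  · exact hΩc.measure_lt_top.ne

lemma prob_mu (hΩc : IsCompact Ω) (h0 : (0 : EuclideanSpace ℝ (Fin n)) ∈ interior Ω) :
    IsProbabilityMeasure ((volume Ω)⁻¹ • volume.restrict Ω) := by
  obtain ⟨hc0, hcT⟩ := vol_pos_ne hΩc h0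
  constructor
  rw [Measure.smul_apply, Measure.restrict_apply MeasurableSet.univ, univ_inter, smul_eq_mul,
    ENNReal.inv_mul_cancel hc0 hcT]

lemma prod_law (hn : 0 < n) (hΩc : IsCompact Ω)
    (h0 : (0 : EuclideanSpace ℝ (Fin n)) ∈ interior Ω)
    (hstar : ∀ x ∈ Ω, ∀ t : ℝ, t ∈ Icc (0 : ℝ) 1 → t • x ∈ Ω) :
    (Measure.map (gauge Ω) ((volume Ω)⁻¹ • volume.restrict Ω)).prod
        (Measure.map (fun x => (gauge Ω x)⁻¹ • x) ((volume Ω)⁻¹ • volume.restrict Ω)) =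
      Measure.map (fun x => (gauge Ω x, (gauge Ω x)⁻¹ • x)) ((volume Ω)⁻¹ • volume.restrict Ω) := by
  set T : EuclideanSpace ℝ (Fin n) → EuclideanSpace ℝ (Fin n) :=
    fun x => (gauge Ω x)⁻¹ • x with hTdef
  set μ : Measure (EuclideanSpace ℝ (Fin n)) := (volume Ω)⁻¹ • volume.restrict Ω with hμ
  obtain ⟨hc0, hcT⟩ := vol_pos_ne hΩc h0
  have hgm : Measurable (gauge Ω) := gauge_measurable hΩc h0 hstar
  have hTm : Measurable T := (hgm.inv).smul measurable_id
  have hpairm : Measurable (fun x => (gauge Ω x, T x)) := hgm.prodMk hTm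
  haveI : IsProbabilityMeasure μ := prob_mu hΩc h0
  haveI : IsProbabilityMeasure (Measure.map (gauge Ω) μ) :=
    Measure.isProbabilityMeasure_map hgm.aemeasurable
  haveI : IsProbabilityMeasure (Measure.map T μ) :=
    Measure.isProbabilityMeasure_map hTm.aemeasurable
  apply Measure.prod_eq
  intro A B hA hB
  have hμapp : ∀ (X : Set (EuclideanSpace ℝ (Fin n))), MeasurableSet X →
      μ X = (volume Ω)⁻¹ * volume (X ∩ Ω) := by
    intro X hX
    rw [hμ, Measure.smul_apply, Measure.restrict_apply hX, smul_eq_mul]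
  rw [Measure.map_apply hpairm (hA.prod hB), Measure.map_apply hgm hA,
    Measure.map_apply hTm hB]
  have hpre : (fun x => (gauge Ω x, T x)) ⁻¹' (A ×ˢ B) = gauge Ω ⁻¹' A ∩ T ⁻¹' B := by
    ext x; simp [Set.mem_prod]
  rw [hpre, hμapp _ ((hgm hA).inter (hTm hB)), hμapp _ (hgm hA), hμapp _ (hTm hB)]
  have h := indep_vol hn hΩc h0 hstar B hB A hA
  set c := volume Ω
  set a := volume (gauge Ω ⁻¹' A ∩ (T ⁻¹' B ∩ Ω))
  set b := volume (gauge Ω ⁻¹' A ∩ Ω)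
  set d := volume (T ⁻¹' B ∩ Ω)
  have hassoc : gauge Ω ⁻¹' A ∩ T ⁻¹' B ∩ Ω = gauge Ω ⁻¹' A ∩ (T ⁻¹' B ∩ Ω) := inter_assoc _ _ _
  rw [hassoc]
  show c⁻¹ * a = c⁻¹ * b * (c⁻¹ * d)
  have : c⁻¹ * b * (c⁻¹ * d) = c⁻¹ * (c⁻¹ * (b * d)) := by ring
  have h2 : c⁻¹ * (c⁻¹ * (c * a)) = c⁻¹ * a := by
    rw [← mul_assoc c⁻¹ c a, ENNReal.inv_mul_cancel hc0 hcT, one_mul]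
  rw [this, ← h, mul_comm a c, h2]

lemma lint_pow (hn : 0 < n) {τ : ℝ} (hτ : 0 ≤ τ) :
    ∫⁻ s in Ioc (0:ℝ) τ, ENNReal.ofReal ((n:ℝ) * s^(n-1)) = ENNReal.ofReal (τ^n) := by
  have hint : Integrable (fun s : ℝ => (n:ℝ) * s^(n-1)) (volume.restrict (Ioc 0 τ)) := by
    apply Continuous.integrableOn_Ioc
    exact continuous_const.mul (continuous_pow _)
  have hnn : 0 ≤ᵐ[volume.restrict (Ioc (0:ℝ) τ)] fun s : ℝ => (n:ℝ) * s^(n-1) := by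
    filter_upwards [ae_restrict_mem measurableSet_Ioc] with s hs
    have : (0:ℝ) < s := hs.1
    positivity
  rw [← ofReal_integral_eq_lintegral_ofReal hint hnn]
  congr 1
  rw [← intervalIntegral.integral_of_le hτ, intervalIntegral.integral_const_mul,
    integral_pow, Nat.sub_add_cancel hn]
  have hne : (n:ℝ) ≠ 0 := Nat.cast_ne_zero.2 hn.ne'
  field_simp
  rw [zero_pow hn.ne', sub_zero, Nat.cast_sub (Nat.succ_le_of_lt hn)]
  ring

lemma beta_law (hn : 0 < n) (hΩc : IsCompact Ω)
    (h0 : (0 : EuclideanSpace ℝ (Fin n)) ∈ interior Ω)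
    (hstar : ∀ x ∈ Ω, ∀ t : ℝ, t ∈ Icc (0 : ℝ) 1 → t • x ∈ Ω) :
    Measure.map (gauge Ω) ((volume Ω)⁻¹ • volume.restrict Ω) =
      (volume.restrict (Ioc (0:ℝ) 1)).withDensity
        (fun s => ENNReal.ofReal ((n:ℝ) * s^(n-1))) := by
  set μ : Measure (EuclideanSpace ℝ (Fin n)) := (volume Ω)⁻¹ • volume.restrict Ω with hμ
  obtain ⟨hc0, hcT⟩ := vol_pos_ne hΩc h0
  have hgm : Measurable (gauge Ω) := gauge_measurable hΩc h0 hstar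
  have hdm : Measurable fun s : ℝ => ENNReal.ofReal ((n:ℝ) * s^(n-1)) := by
    apply ENNReal.measurable_ofReal.comp
    exact (measurable_const.mul (measurable_id.pow_const _))
  haveI : IsProbabilityMeasure μ := by
    constructor
    rw [hμ, Measure.smul_apply, Measure.restrict_apply MeasurableSet.univ, univ_inter,
      smul_eq_mul, ENNReal.inv_mul_cancel hc0 hcT]
  haveI : IsProbabilityMeasure (Measure.map (gauge Ω) μ) :=
    Measure.isProbabilityMeasure_map hgm.aemeasurable
  apply Measure.ext_of_Iic
  intro t
  have hLHS : Measure.map (gauge Ω) μ (Iic t) =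
      (volume Ω)⁻¹ * volume ({x | gauge Ω x ≤ t} ∩ Ω) := by
    rw [Measure.map_apply hgm measurableSet_Iic, hμ, Measure.smul_apply,
      Measure.restrict_apply (hgm measurableSet_Iic), smul_eq_mul]
    rfl
  have hRHS : ((volume.restrict (Ioc (0:ℝ) 1)).withDensity
      (fun s => ENNReal.ofReal ((n:ℝ) * s^(n-1)))) (Iic t) =
      ∫⁻ s in Ioc (0:ℝ) 1 ∩ Iic t, ENNReal.ofReal ((n:ℝ) * s^(n-1)) := by
    rw [withDensity_apply _ measurableSet_Iic, Measure.restrict_restrict measurableSet_Iic,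
      inter_comm]
  rcases le_or_gt t 0 with ht | ht
  · have h1 : {x | gauge Ω x ≤ t} ∩ Ω ⊆ {0} := by
      intro x hx
      simp only [mem_singleton_iff]
      by_contra hne
      exact absurd (hx.1.trans ht) (not_le.2 (gauge_pos' hΩc h0 hne))
    have h2 : Ioc (0:ℝ) 1 ∩ Iic t = ∅ := by
      ext s; simp only [mem_inter_iff, mem_Ioc, mem_Iic, mem_empty_iff_false, iff_false]
      rintro ⟨⟨hs, _⟩, hst⟩; linarith
    rw [hLHS, hRHS, h2, measure_mono_null h1 (vol_single hn), mul_zero]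
    simp
  rcases le_or_gt t 1 with ht1 | ht1
  · have h2 : Ioc (0:ℝ) 1 ∩ Iic t = Ioc 0 t := by
      ext s; simp only [mem_inter_iff, mem_Ioc, mem_Iic]
      constructor
      · rintro ⟨⟨a, b⟩, c⟩; exact ⟨a, c⟩
      · rintro ⟨a, b⟩; exact ⟨⟨a, b.trans ht1⟩, b⟩
    have h1 : {x | gauge Ω x ≤ t} ∩ Ω = {x | gauge Ω x ≤ t} ∩ univ := by
      rw [inter_univ]
      apply inter_eq_left.2
      intro x hx
      exact (mem_iff_gauge_le_one hΩc h0 hstar).2 (le_trans hx ht1)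
    rw [hLHS, hRHS, h1, h2, scale_meas hΩc h0 hstar univ (fun c hc x _ => mem_univ _) ht,
      lint_pow hn ht.le, inter_univ]
    have harr : (volume Ω)⁻¹ * (ENNReal.ofReal (t^n) * volume Ω) =
        ENNReal.ofReal (t^n) * ((volume Ω)⁻¹ * volume Ω) := by ring
    rw [harr, ENNReal.inv_mul_cancel hc0 hcT, mul_one]
  · have h2 : Ioc (0:ℝ) 1 ∩ Iic t = Ioc 0 1 := by
      apply inter_eq_left.2
      intro s hs; exact le_trans hs.2 ht1.le
    have h1 : {x | gauge Ω x ≤ t} ∩ Ω = Ω := by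
      apply inter_eq_right.2
      intro x hx
      exact le_trans ((mem_iff_gauge_le_one hΩc h0 hstar).1 hx) ht1.le
    rw [hLHS, hRHS, h1, h2, lint_pow hn zero_le_one, one_pow, ENNReal.ofReal_one,
      ENNReal.inv_mul_cancel hc0 hcT]

lemma int_mu (hΩc : IsCompact Ω) (h0 : (0 : EuclideanSpace ℝ (Fin n)) ∈ interior Ω)
    {φ : EuclideanSpace ℝ (Fin n) → ℝ} (hφ : Continuous φ) :
    Integrable φ ((volume Ω)⁻¹ • volume.restrict Ω) := by
  obtain ⟨hc0, _⟩ := vol_pos_ne hΩc h0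
  have h1 : IntegrableOn φ Ω volume := hφ.continuousOn.integrableOn_compact hΩc
  exact h1.smul_measure (ENNReal.inv_ne_top.2 hc0)

lemma grad_cont {g : EuclideanSpace ℝ (Fin n) → ℝ} (hg : ContDiff ℝ (⊤ : ℕ∞) g) :
    Continuous (fun x => gradient g x) := by
  have : (fun x => gradient g x) =
      fun x => (InnerProductSpace.toDual ℝ (EuclideanSpace ℝ (Fin n))).symm (fderiv ℝ g x) := rfl
  rw [this]
  exact (LinearIsometryEquiv.continuous _).comp (hg.continuous_fderiv (by simp))

lemma fderiv_eq_inner_grad {g : EuclideanSpace ℝ (Fin n) → ℝ} (hg : ContDiff ℝ (⊤ : ℕ∞) g)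
    (x v : EuclideanSpace ℝ (Fin n)) : fderiv ℝ g x v = ⟪gradient g x, v⟫ := by
  have h1 : HasFDerivAt g (InnerProductSpace.toDual ℝ _ (gradient g x)) x :=
    ((hg.differentiable (by simp) x).hasGradientAt).hasFDerivAt
  rw [h1.fderiv, InnerProductSpace.toDual_apply_apply]

-- THE CONE IDENTITY

lemma cone_identity (hn : 0 < n) (hΩc : IsCompact Ω)
    (h0 : (0 : EuclideanSpace ℝ (Fin n)) ∈ interior Ω)
    (hstar : ∀ x ∈ Ω, ∀ t : ℝ, t ∈ Icc (0 : ℝ) 1 → t • x ∈ Ω)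
    (g : EuclideanSpace ℝ (Fin n) → ℝ) (hg : ContDiff ℝ (⊤ : ℕ∞) g) :
    (n:ℝ) * (∫ x, g x ∂((volume Ω)⁻¹ • volume.restrict Ω)) +
        ∫ x, ⟪x, gradient g x⟫ ∂((volume Ω)⁻¹ • volume.restrict Ω) =
      (n:ℝ) * ∫ x, g ((gauge Ω x)⁻¹ • x) ∂((volume Ω)⁻¹ • volume.restrict Ω) := by
  classical
  set T : EuclideanSpace ℝ (Fin n) → EuclideanSpace ℝ (Fin n) :=
    fun x => (gauge Ω x)⁻¹ • x with hTdef
  set μ : Measure (EuclideanSpace ℝ (Fin n)) := (volume Ω)⁻¹ • volume.restrict Ω with hμ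
  obtain ⟨hc0, hcT⟩ := vol_pos_ne hΩc h0
  have habs : Absorbent ℝ Ω := absorbent_nhds_zero (mem_interior_iff_mem_nhds.1 h0)
  have hgm : Measurable (gauge Ω) := gauge_measurable hΩc h0 hstar
  have hTm : Measurable T := (hgm.inv).smul measurable_id
  have hpairm : Measurable (fun x => (gauge Ω x, T x)) := hgm.prodMk hTm
  haveI : IsProbabilityMeasure μ := prob_mu hΩc h0
  have hμapp : ∀ (X : Set (EuclideanSpace ℝ (Fin n))), MeasurableSet X →
      μ X = (volume Ω)⁻¹ * volume (X ∩ Ω) := by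
    intro X hX
    rw [hμ, Measure.smul_apply, Measure.restrict_apply hX, smul_eq_mul]
  -- bounding ball
  obtain ⟨R₀, hR₀⟩ := hΩc.isBounded.subset_closedBall (0 : EuclideanSpace ℝ (Fin n))
  set R : ℝ := max R₀ 0 + 1 with hRdef
  have hRpos : 0 < R := by positivity
  have hR₀R : R₀ < R := by
    rw [hRdef]; have := le_max_left R₀ 0; linarith
  have hΩR : Ω ⊆ ball 0 R := fun x hx =>
    mem_ball_zero_iff.2 ((mem_closedBall_zero_iff.1 (hR₀ hx)).trans_lt hR₀R)
  have hgauge_lb : ∀ x : EuclideanSpace ℝ (Fin n), ‖x‖ / R ≤ gauge Ω x := by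
    intro x
    have := gauge_mono habs hΩR x
    rwa [gauge_ball hRpos.le] at this
  have hTball : ∀ x : EuclideanSpace ℝ (Fin n), ‖T x‖ ≤ R := by
    intro x
    rcases eq_or_ne x 0 with rfl | hx
    · simp [hTdef, hRpos.le]
    · have hgx : 0 < gauge Ω x := gauge_pos' hΩc h0 hx
      have hTx : ‖T x‖ = (gauge Ω x)⁻¹ * ‖x‖ := by
        rw [hTdef]
        simp only [norm_smul, Real.norm_eq_abs, abs_of_nonneg (inv_nonneg.2 hgx.le)]
      rw [hTx, inv_mul_le_iff₀ hgx]
      have h2 := hgauge_lb x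
      rw [div_le_iff₀ hRpos] at h2
      linarith [mul_comm (gauge Ω x) R ▸ h2]
  -- the integrand on the product space
  set u : ℝ × EuclideanSpace ℝ (Fin n) → ℝ :=
    fun p => (n:ℝ) * g (p.1 • p.2) + ⟪p.1 • p.2, gradient g (p.1 • p.2)⟫ with hudef
  have hsm : Continuous fun p : ℝ × EuclideanSpace ℝ (Fin n) => p.1 • p.2 :=
    continuous_fst.smul continuous_snd
  have hu_cont : Continuous u := by
    apply Continuous.add
    · exact continuous_const.mul (hg.continuous.comp hsm)
    · exact hsm.inner ((grad_cont hg).comp hsm)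
  -- the product measure
  set β : Measure ℝ := Measure.map (gauge Ω) μ with hβ
  set σ : Measure (EuclideanSpace ℝ (Fin n)) := Measure.map T μ with hσ
  haveI : IsProbabilityMeasure β := Measure.isProbabilityMeasure_map hgm.aemeasurable
  haveI : IsProbabilityMeasure σ := Measure.isProbabilityMeasure_map hTm.aemeasurable
  -- concentration of β.prod σ
  have hβconc : β (Icc (0:ℝ) 1)ᶜ = 0 := by
    rw [hβ, Measure.map_apply hgm (measurableSet_Icc.compl),
      hμapp _ (hgm measurableSet_Icc.compl)]
    have : gauge Ω ⁻¹' (Icc (0:ℝ) 1)ᶜ ∩ Ω = ∅ := by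
      apply eq_empty_iff_forall_notMem.2
      rintro x ⟨hx1, hx2⟩
      exact hx1 ⟨gauge_nonneg x, gauge_le_one_of_mem hx2⟩
    rw [this, measure_empty, mul_zero]
  have hσconc : σ (closedBall (0:EuclideanSpace ℝ (Fin n)) R)ᶜ = 0 := by
    rw [hσ, Measure.map_apply hTm measurableSet_closedBall.compl,
      hμapp _ (hTm measurableSet_closedBall.compl)]
    have : T ⁻¹' (closedBall (0:EuclideanSpace ℝ (Fin n)) R)ᶜ = ∅ := by
      ext x
      simp only [mem_preimage, mem_compl_iff, mem_closedBall_zero_iff, mem_empty_iff_false,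
        iff_false, not_not]
      exact hTball x
    rw [this, empty_inter, measure_empty, mul_zero]
  set K : Set (ℝ × EuclideanSpace ℝ (Fin n)) :=
    Icc (0:ℝ) 1 ×ˢ closedBall 0 R with hK
  have hKcomp : IsCompact K := isCompact_Icc.prod (isCompact_closedBall _ _)
  obtain ⟨M, hM⟩ := hKcomp.exists_bound_of_continuousOn hu_cont.continuousOn
  have hprodconc : (β.prod σ) Kᶜ = 0 := by
    have hsub : Kᶜ ⊆ ((Icc (0:ℝ) 1)ᶜ ×ˢ univ) ∪
        (univ ×ˢ (closedBall (0:EuclideanSpace ℝ (Fin n)) R)ᶜ) := by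
      intro p hp
      simp only [hK, mem_compl_iff, mem_prod, not_and] at hp
      by_cases h1 : p.1 ∈ Icc (0:ℝ) 1
      · exact Or.inr ⟨mem_univ _, hp h1⟩
      · exact Or.inl ⟨h1, mem_univ _⟩
    apply measure_mono_null hsub
    apply measure_union_null
    · rw [Measure.prod_prod, hβconc, zero_mul]
    · rw [Measure.prod_prod, hσconc, mul_zero]
  have hu_int : Integrable u (β.prod σ) := by
    refine ⟨hu_cont.aestronglyMeasurable, ?_⟩
    apply HasFiniteIntegral.of_bounded (C := M)
    rw [ae_iff]
    apply measure_mono_null _ hprodconc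
    intro p hp
    simp only [mem_setOf_eq, not_le] at hp
    simp only [mem_compl_iff]
    intro hpK
    exact absurd (hM p hpK) (not_le.2 hp)
  -- Step 1 : rewrite LHS as ∫ u(pair x) dμ
  have hgint : Integrable g μ := int_mu hΩc h0 hg.continuous
  have hinnerint : Integrable (fun x => ⟪x, gradient g x⟫) μ :=
    int_mu hΩc h0 (continuous_id.inner (grad_cont hg))
  have step1 : (n:ℝ) * (∫ x, g x ∂μ) + ∫ x, ⟪x, gradient g x⟫ ∂μ =
      ∫ x, u (gauge Ω x, T x) ∂μ := by
    rw [← integral_const_mul, ← integral_add (hgint.const_mul _) hinnerint]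
    apply integral_congr_ae
    have hzero : μ ({(0: EuclideanSpace ℝ (Fin n))} : Set (EuclideanSpace ℝ (Fin n))) = 0 := by
      rw [hμapp _ (measurableSet_singleton 0)]
      exact mul_eq_zero.2 (Or.inr (measure_mono_null inter_subset_left (vol_single hn)))
    have hne0 : ∀ᵐ x ∂μ, x ≠ (0:EuclideanSpace ℝ (Fin n)) := by
      rw [ae_iff]
      apply measure_mono_null _ hzero
      intro x hx
      simp only [mem_setOf_eq, not_not] at hx
      simp [hx]
    filter_upwards [hne0] with x hx
    have hgx : gauge Ω x ≠ 0 := (gauge_pos' hΩc h0 hx).ne'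
    have hrec : gauge Ω x • T x = x := by
      rw [hTdef]; exact smul_inv_smul₀ hgx x
    rw [hudef]
    simp only
    rw [hrec]
  -- Step 2 : transfer to the product measure
  have step2 : ∫ x, u (gauge Ω x, T x) ∂μ = ∫ p, u p ∂(β.prod σ) := by
    rw [prod_law hn hΩc h0 hstar]
    exact (integral_map hpairm.aemeasurable hu_cont.aestronglyMeasurable).symm
  -- Step 3 : Fubini and FTC
  have step3 : ∫ p, u p ∂(β.prod σ) = ∫ θ, (n:ℝ) * g θ ∂σ := by
    rw [integral_prod_symm u hu_int]
    apply integral_congr_ae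
    apply Filter.Eventually.of_forall
    intro θ
    simp only
    have hβlaw : β = (volume.restrict (Ioc (0:ℝ) 1)).withDensity
        (fun s => ENNReal.ofReal ((n:ℝ) * s^(n-1))) := beta_law hn hΩc h0 hstar
    have hdcoe : (fun s : ℝ => ENNReal.ofReal ((n:ℝ) * s^(n-1))) =
        fun s : ℝ => ((Real.toNNReal ((n:ℝ) * s^(n-1)) : ℝ≥0) : ℝ≥0∞) := rfl
    have hdm : Measurable fun s : ℝ => Real.toNNReal ((n:ℝ) * s^(n-1)) :=
      (measurable_const.mul (measurable_id.pow_const _)).real_toNNReal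
    rw [hβlaw, hdcoe, integral_withDensity_eq_integral_smul hdm]
    have hcongr : ∫ s in Ioc (0:ℝ) 1, Real.toNNReal ((n:ℝ) * s^(n-1)) • u (s, θ) =
        ∫ s in Ioc (0:ℝ) 1, ((n:ℝ) * s^(n-1)) * u (s, θ) := by
      apply setIntegral_congr_fun measurableSet_Ioc
      intro s hs
      have hnn : (0:ℝ) ≤ (n:ℝ) * s^(n-1) := by
        have : (0:ℝ) < s := hs.1
        positivity
      simp only [NNReal.smul_def, Real.coe_toNNReal _ hnn, smul_eq_mul]
    rw [hcongr, ← intervalIntegral.integral_of_le zero_le_one]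
    -- FTC
    have hder : ∀ s ∈ uIcc (0:ℝ) 1,
        HasDerivAt (fun s : ℝ => (n:ℝ) * (s^n * g (s • θ)))
          (((n:ℝ) * s^(n-1)) * u (s, θ)) s := by
      intro s _
      have h3 : HasDerivAt (fun s : ℝ => s • θ) θ s := by
        simpa using (hasDerivAt_id s).smul_const θ
      have h4 : HasDerivAt (fun s : ℝ => g (s • θ)) (⟪θ, gradient g (s • θ)⟫) s := by
        have := ((hg.differentiable (by simp) (s • θ)).hasFDerivAt).comp_hasDerivAt s h3
        rwa [fderiv_eq_inner_grad hg, real_inner_comm] at this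
      have hpow : HasDerivAt (fun s : ℝ => s^n) ((n:ℝ) * s^(n-1)) s := hasDerivAt_pow n s
      have hmul := hpow.mul h4
      have hfin := hmul.const_mul (n:ℝ)
      refine hfin.congr_deriv (Eq.symm ?_)
      rw [hudef]
      simp only
      rw [real_inner_smul_left]
      have hpow1 : s^(n-1) * s = s^n := by
        rw [← pow_succ, Nat.sub_add_cancel hn]
      linear_combination ((n:ℝ) * ⟪θ, gradient g (s • θ)⟫) * hpow1
    have hcont : Continuous fun s : ℝ => ((n:ℝ) * s^(n-1)) * u (s, θ) := by
      apply Continuous.mul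
      · exact continuous_const.mul (continuous_pow _)
      · exact hu_cont.comp (Continuous.prodMk_left θ)
    have hftc := intervalIntegral.integral_eq_sub_of_hasDerivAt hder (hcont.intervalIntegrable 0 1)
    rw [hftc]
    simp [zero_pow hn.ne']
  have step4 : ∫ θ, (n:ℝ) * g θ ∂σ = (n:ℝ) * ∫ x, g (T x) ∂μ := by
    rw [integral_const_mul, hσ, integral_map hTm.aemeasurable hg.continuous.aestronglyMeasurable]
  rw [step1, step2, step3, step4]

lemma int_sigma (hΩc : IsCompact Ω) (h0 : (0 : EuclideanSpace ℝ (Fin n)) ∈ interior Ω)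
    (hstar : ∀ x ∈ Ω, ∀ t : ℝ, t ∈ Icc (0 : ℝ) 1 → t • x ∈ Ω)
    {φ : EuclideanSpace ℝ (Fin n) → ℝ} (hφ : Continuous φ) :
    Integrable φ (Measure.map (fun x => (gauge Ω x)⁻¹ • x)
      ((volume Ω)⁻¹ • volume.restrict Ω)) := by
  classical
  set T : EuclideanSpace ℝ (Fin n) → EuclideanSpace ℝ (Fin n) :=
    fun x => (gauge Ω x)⁻¹ • x with hTdef
  set μ : Measure (EuclideanSpace ℝ (Fin n)) := (volume Ω)⁻¹ • volume.restrict Ω with hμ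
  have habs : Absorbent ℝ Ω := absorbent_nhds_zero (mem_interior_iff_mem_nhds.1 h0)
  have hgm : Measurable (gauge Ω) := gauge_measurable hΩc h0 hstar
  have hTm : Measurable T := (hgm.inv).smul measurable_id
  haveI : IsProbabilityMeasure μ := prob_mu hΩc h0
  haveI : IsProbabilityMeasure (Measure.map T μ) := Measure.isProbabilityMeasure_map hTm.aemeasurable
  have hμapp : ∀ (X : Set (EuclideanSpace ℝ (Fin n))), MeasurableSet X →
      μ X = (volume Ω)⁻¹ * volume (X ∩ Ω) := by
    intro X hX
    rw [hμ, Measure.smul_apply, Measure.restrict_apply hX, smul_eq_mul]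
  obtain ⟨R₀, hR₀⟩ := hΩc.isBounded.subset_closedBall (0 : EuclideanSpace ℝ (Fin n))
  set R : ℝ := max R₀ 0 + 1 with hRdef
  have hRpos : 0 < R := by positivity
  have hR₀R : R₀ < R := by
    rw [hRdef]; have := le_max_left R₀ 0; linarith
  have hΩR : Ω ⊆ ball 0 R := fun x hx =>
    mem_ball_zero_iff.2 ((mem_closedBall_zero_iff.1 (hR₀ hx)).trans_lt hR₀R)
  have hgauge_lb : ∀ x : EuclideanSpace ℝ (Fin n), ‖x‖ / R ≤ gauge Ω x := by
    intro x
    have := gauge_mono habs hΩR x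
    rwa [gauge_ball hRpos.le] at this
  have hTball : ∀ x : EuclideanSpace ℝ (Fin n), ‖T x‖ ≤ R := by
    intro x
    rcases eq_or_ne x 0 with rfl | hx
    · simp [hTdef, hRpos.le]
    · have hgx : 0 < gauge Ω x := by
        rcases (gauge_nonneg x).lt_or_eq with h | h
        · exact h
        · exfalso
          have hb : Bornology.IsVonNBounded ℝ Ω := by
            rw [NormedSpace.isVonNBounded_iff]; exact hΩc.isBounded
          exact hx ((gauge_eq_zero habs hb).1 h.symm)
      have hTx : ‖T x‖ = (gauge Ω x)⁻¹ * ‖x‖ := by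
        rw [hTdef]
        simp only [norm_smul, Real.norm_eq_abs, abs_of_nonneg (inv_nonneg.2 hgx.le)]
      rw [hTx, inv_mul_le_iff₀ hgx]
      have h2 := hgauge_lb x
      rw [div_le_iff₀ hRpos] at h2
      linarith [mul_comm (gauge Ω x) R ▸ h2]
  have hσconc : (Measure.map T μ) (closedBall (0:EuclideanSpace ℝ (Fin n)) R)ᶜ = 0 := by
    rw [Measure.map_apply hTm measurableSet_closedBall.compl,
      hμapp _ (hTm measurableSet_closedBall.compl)]
    have : T ⁻¹' (closedBall (0:EuclideanSpace ℝ (Fin n)) R)ᶜ = ∅ := by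
      ext x
      simp only [mem_preimage, mem_compl_iff, mem_closedBall_zero_iff, mem_empty_iff_false,
        iff_false, not_not]
      exact hTball x
    rw [this, empty_inter, measure_empty, mul_zero]
  obtain ⟨M, hM⟩ := (isCompact_closedBall (0:EuclideanSpace ℝ (Fin n)) R).exists_bound_of_continuousOn
    hφ.continuousOn
  refine ⟨hφ.aestronglyMeasurable, ?_⟩
  apply HasFiniteIntegral.of_bounded (C := M)
  rw [ae_iff]
  apply measure_mono_null _ hσconc
  intro x hx
  simp only [mem_setOf_eq, not_le] at hx
  simp only [mem_compl_iff, mem_closedBall_zero_iff]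
  intro hball
  exact absurd (hM x (mem_closedBall_zero_iff.2 hball)) (not_le.2 hx)

lemma inner_grad_sq {f : EuclideanSpace ℝ (Fin n) → ℝ} (hf : ContDiff ℝ (⊤ : ℕ∞) f) (a : ℝ)
    (x : EuclideanSpace ℝ (Fin n)) :
    ⟪x, gradient (fun y => (f y - a)^2) x⟫ = 2*(f x - a)*⟪x, gradient f x⟫ := by
  have hg : ContDiff ℝ (⊤ : ℕ∞) (fun y => (f y - a)^2) := (hf.sub contDiff_const).pow 2
  have h1 : HasFDerivAt f (fderiv ℝ f x) x := (hf.differentiable (by simp) x).hasFDerivAt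
  have hsub : HasFDerivAt (fun y => f y - a) (fderiv ℝ f x) x := h1.sub_const a
  have hmul := hsub.mul hsub
  have heq : (fun y => (f y - a)^2) = fun y => (f y - a) * (f y - a) := by
    ext y; ring
  have hD : fderiv ℝ (fun y => (f y - a)^2) x =
      (f x - a) • fderiv ℝ f x + (f x - a) • fderiv ℝ f x := by
    rw [heq]
    exact hmul.fderiv
  rw [real_inner_comm, ← fderiv_eq_inner_grad hg, hD]
  simp only [ContinuousLinearMap.add_apply, ContinuousLinearMap.coe_smul', Pi.smul_apply,
    smul_eq_mul]
  rw [fderiv_eq_inner_grad hf, real_inner_comm]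
  ring

end HardyAux

/-- Hardy inequality with boundary (Theorem 2.1): for a star-shaped compact
body `Ω` with smooth boundary, `Var_{λ_Ω} f ≤ (4/n²)∫⟨x,∇f⟩² dλ_Ω + 2 Var_{σ_{∂Ω}} f`,
where `σ_{∂Ω}` is the cone measure, i.e. the pushforward of the normalized Lebesgue measure
`λ_Ω` on `Ω` under `x ↦ x/‖x‖_Ω` (with `‖·‖_Ω` the gauge of `Ω`). -/
theorem stmt_2 (n : ℕ) (hn : 2 ≤ n) (Ω : Set (EuclideanSpace ℝ (Fin n)))
    (hΩc : IsCompact Ω) (h0 : (0 : EuclideanSpace ℝ (Fin n)) ∈ interior Ω)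
    (hstar : ∀ x ∈ Ω, ∀ t : ℝ, t ∈ Icc (0 : ℝ) 1 → t • x ∈ Ω)
    (ν : EuclideanSpace ℝ (Fin n) → EuclideanSpace ℝ (Fin n))
    (hdiv : ∀ (ζ : EuclideanSpace ℝ (Fin n) → EuclideanSpace ℝ (Fin n))
      (g : EuclideanSpace ℝ (Fin n) → ℝ), ContDiff ℝ (⊤ : ℕ∞) ζ → ContDiff ℝ (⊤ : ℕ∞) g →
      ∫ x in Ω, vecDiv ζ x * g x =
        - ∫ x in Ω, ⟪ζ x, gradient g x⟫ +
          ∫ x in frontier Ω, ⟪ζ x, ν x⟫ * g x ∂μH[(n : ℝ) - 1])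
    (f : EuclideanSpace ℝ (Fin n) → ℝ) (hf : ContDiff ℝ (⊤ : ℕ∞) f) :
    var' ((volume Ω)⁻¹ • volume.restrict Ω) f ≤
      4 / (n : ℝ) ^ 2 * ∫ x, ⟪x, gradient f x⟫ ^ 2 ∂((volume Ω)⁻¹ • volume.restrict Ω) +
        2 * var' (Measure.map (fun x => (gauge Ω x)⁻¹ • x)
          ((volume Ω)⁻¹ • volume.restrict Ω)) f := by
  classical
  have hn0 : 0 < n := by omega
  have hnR : (0:ℝ) < n := by exact_mod_cast hn0
  set T : EuclideanSpace ℝ (Fin n) → EuclideanSpace ℝ (Fin n) :=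
    fun x => (gauge Ω x)⁻¹ • x with hTdef
  set μ : Measure (EuclideanSpace ℝ (Fin n)) := (volume Ω)⁻¹ • volume.restrict Ω with hμ
  set σ : Measure (EuclideanSpace ℝ (Fin n)) := Measure.map T μ with hσ
  have hgm : Measurable (gauge Ω) := gauge_measurable hΩc h0 hstar
  have hTm : Measurable T := (hgm.inv).smul measurable_id
  haveI : IsProbabilityMeasure μ := prob_mu hΩc h0
  haveI : IsProbabilityMeasure σ := Measure.isProbabilityMeasure_map hTm.aemeasurable
  set a : ℝ := ∫ θ, f θ ∂σ with ha
  have hmapf : ∀ φ : EuclideanSpace ℝ (Fin n) → ℝ, Continuous φ →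
      ∫ θ, φ θ ∂σ = ∫ x, φ (T x) ∂μ := fun φ hφ =>
    integral_map hTm.aemeasurable hφ.aestronglyMeasurable
  set g : EuclideanSpace ℝ (Fin n) → ℝ := fun y => (f y - a)^2 with hg
  have hgsmooth : ContDiff ℝ (⊤ : ℕ∞) g := (hf.sub contDiff_const).pow 2
  have hcone := cone_identity hn0 hΩc h0 hstar g hgsmooth
  -- replace the gradient term
  have hgradint : ∫ x, ⟪x, gradient g x⟫ ∂μ =
      ∫ x, 2*(f x - a)*⟪x, gradient f x⟫ ∂μ := by
    apply integral_congr_ae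
    apply Filter.Eventually.of_forall
    intro x
    exact inner_grad_sq hf a x
  rw [hgradint] at hcone
  set V : ℝ := ∫ x, g x ∂μ with hV
  set S : ℝ := ∫ x, g (T x) ∂μ with hS
  set G : ℝ := ∫ x, ⟪x, gradient f x⟫^2 ∂μ with hG
  -- pointwise AM-GM and integration
  have hintD : Integrable (fun x => 2*(f x - a)*⟪x, gradient f x⟫) μ :=
    int_mu hΩc h0 (by
      apply Continuous.mul
      · exact (continuous_const.mul (hf.continuous.sub continuous_const))
      · exact continuous_id.inner (grad_cont hf))
  have hintRHS : Integrable (fun x => ((n:ℝ)/2) * (f x - a)^2 + (2/(n:ℝ)) * ⟪x, gradient f x⟫^2) μ :=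
    int_mu hΩc h0 (by
      apply Continuous.add
      · exact continuous_const.mul (((hf.continuous.sub continuous_const)).pow 2)
      · exact continuous_const.mul ((continuous_id.inner (grad_cont hf)).pow 2))
  have hD_lb : -(∫ x, 2*(f x - a)*⟪x, gradient f x⟫ ∂μ) ≤ ((n:ℝ)/2) * V + (2/(n:ℝ)) * G := by
    have hpt : ∀ x, -(2*(f x - a)*⟪x, gradient f x⟫) ≤
        ((n:ℝ)/2) * (f x - a)^2 + (2/(n:ℝ)) * ⟪x, gradient f x⟫^2 := by
      intro x
      set p := f x - a
      set q := ⟪x, gradient f x⟫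
      have key : 0 ≤ ((n:ℝ)/2) * p^2 + 2*p*q + (2/(n:ℝ)) * q^2 := by
        have h2 : ((n:ℝ)/2) * p^2 + 2*p*q + (2/(n:ℝ)) * q^2 =
            (2/(n:ℝ)) * ((n/2) * p + q)^2 := by
          field_simp
          ring
        rw [h2]
        positivity
      linarith
    have hintD' : Integrable (fun x => -(2*(f x - a)*⟪x, gradient f x⟫)) μ := hintD.neg
    have hmono : ∫ x, -(2*(f x - a)*⟪x, gradient f x⟫) ∂μ ≤
        ∫ x, (((n:ℝ)/2) * (f x - a)^2 + (2/(n:ℝ)) * ⟪x, gradient f x⟫^2) ∂μ :=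
      integral_mono hintD' hintRHS (fun x => hpt x)
    rw [integral_neg] at hmono
    calc -(∫ x, 2*(f x - a)*⟪x, gradient f x⟫ ∂μ) ≤
        ∫ x, (((n:ℝ)/2) * (f x - a)^2 + (2/(n:ℝ)) * ⟪x, gradient f x⟫^2) ∂μ := hmono
      _ = ((n:ℝ)/2) * V + (2/(n:ℝ)) * G := by
        have i1 : Integrable (fun x => ((n:ℝ)/2) * (f x - a)^2) μ :=
          int_mu hΩc h0 (continuous_const.mul (((hf.continuous.sub continuous_const)).pow 2))
        have i2 : Integrable (fun x => (2/(n:ℝ)) * ⟪x, gradient f x⟫^2) μ :=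
          int_mu hΩc h0 (continuous_const.mul ((continuous_id.inner (grad_cont hf)).pow 2))
        have i12 : Integrable (fun x => ((n:ℝ)/2) * (f x - a)^2 + (2/(n:ℝ)) * ⟪x, gradient f x⟫^2) μ := hintRHS
        rw [integral_add i1 i2, integral_const_mul, integral_const_mul]
  -- main inequality  V ≤ 2 S + 4/n² G
  have hmain : V ≤ 2 * S + 4/(n:ℝ)^2 * G := by
    have h1 : (n:ℝ) * V + ∫ x, 2*(f x - a)*⟪x, gradient f x⟫ ∂μ = (n:ℝ) * S := hcone
    have h2 : ((n:ℝ)/2) * V ≤ (n:ℝ) * S + (2/(n:ℝ)) * G := by linarith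
    have hpos : (0:ℝ) < 2/(n:ℝ) := by positivity
    calc V = (2/(n:ℝ)) * (((n:ℝ)/2) * V) := by field_simp
      _ ≤ (2/(n:ℝ)) * ((n:ℝ) * S + (2/(n:ℝ)) * G) := mul_le_mul_of_nonneg_left h2 hpos.le
      _ = 2 * S + 4/(n:ℝ)^2 * G := by field_simp; ring
  -- identification of variance terms
  have hvarμ : var' μ f ≤ V := by
    have hVeq : V = var' μ f + ((∫ x, f x ∂μ) - a)^2 := by
      rw [hV, var']
      have hexp : ∀ x, g x = f x^2 - 2*a*(f x) + a^2 := by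
        intro x; rw [hg]; ring
      rw [integral_congr_ae (Filter.Eventually.of_forall hexp)]
      have i1 : Integrable (fun x => f x^2) μ := int_mu hΩc h0 (hf.continuous.pow 2)
      have i2 : Integrable (fun x => 2*a*(f x)) μ := (int_mu hΩc h0 hf.continuous).const_mul _
      have i12 : Integrable (fun x => f x^2 - 2*a*(f x)) μ := i1.sub i2
      rw [integral_add i12 (integrable_const _), integral_sub i1 i2,
        integral_const_mul, integral_const]
      simp only [probReal_univ, measure_univ, ENNReal.toReal_one, smul_eq_mul, one_mul]
      ring
    nlinarith [sq_nonneg ((∫ x, f x ∂μ) - a)]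
  have hvarσ : S = var' σ f := by
    have hfσ : Integrable f σ := int_sigma hΩc h0 hstar hf.continuous
    have hf2σ : Integrable (fun θ => f θ^2) σ := int_sigma hΩc h0 hstar (hf.continuous.pow 2)
    have hSeq : S = ∫ θ, g θ ∂σ := (hmapf g hgsmooth.continuous).symm
    rw [hSeq, var']
    have hexp : ∀ θ, g θ = f θ^2 - 2*a*(f θ) + a^2 := by
      intro θ; rw [hg]; ring
    have i2σ : Integrable (fun θ => 2*a*(f θ)) σ := hfσ.const_mul _
    have i12σ : Integrable (fun θ => f θ^2 - 2*a*(f θ)) σ := hf2σ.sub i2σ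
    rw [integral_congr_ae (Filter.Eventually.of_forall hexp),
      integral_add i12σ (integrable_const _),
      integral_sub hf2σ i2σ, integral_const_mul, integral_const]
    simp only [probReal_univ, measure_univ, ENNReal.toReal_one, smul_eq_mul, one_mul]
    rw [← ha]
    ring
  calc var' μ f ≤ V := hvarμ
    _ ≤ 2 * S + 4/(n:ℝ)^2 * G := hmain
    _ = 4 / (n : ℝ) ^ 2 * G + 2 * var' σ f := by rw [hvarσ]; ring
end

section
/- Let f: [0,∞) → [0,∞) be measurable with M = sup_r f(r) < ∞, and for p > 0 define k_p = (p ∫₀^∞ r^{p−1} f(r) dr)^{1/p}. Then for 0 < p₁ ≤ p₂, k_{p₁}/M^{1/p₁} ≤ k_{p₂}/M^{1/p₂}. -/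
/-!
A bathtub argument. Among functions with values in `[0, M]` and prescribed `p`-th moment
`p ∫ r^{p-1} g = M R^p`, the indicator `M · 1_{(0,R]}` has the smallest `q`-th moment for
`q ≥ p`: the difference `g - M · 1_{(0,R]}` is `≤ 0` on `(0,R]` and `≥ 0` beyond `R`, so
weighting it by the increasing `r^{q-p}` instead of the constant `R^{q-p}` can only increase
its integral.
Taking `R = (p ∫ r^{p-1} f / M)^{1/p}` gives the theorem.
-/

open MeasureTheory Set

lemma integrableOn_rpow_sub_one_Ioc {p : ℝ} (hp : 0 < p) {R : ℝ} (hR : 0 ≤ R) :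
    IntegrableOn (fun r : ℝ => r ^ (p - 1)) (Ioc 0 R) :=
  (intervalIntegrable_iff_integrableOn_Ioc_of_le hR).1 <|
    intervalIntegral.intervalIntegrable_rpow' (by linarith)

lemma integral_rpow_sub_one_Ioc {p : ℝ} (hp : 0 < p) {R : ℝ} (hR : 0 ≤ R) :
    ∫ r in Ioc 0 R, r ^ (p - 1) = R ^ p / p := by
  rw [← intervalIntegral.integral_of_le hR, integral_rpow (Or.inl (by linarith)),
    Real.zero_rpow (by linarith), sub_add_cancel, sub_zero]

lemma rpow_sub_mul_sub_indicator_le {p q R M r x : ℝ} (hpq : p ≤ q) (hR : 0 ≤ R) (hr : 0 < r)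
    (hx₀ : 0 ≤ x) (hxM : x ≤ M) :
    R ^ (q - p) * (r ^ (p - 1) * x - (Ioc 0 R).indicator (fun r => M * r ^ (p - 1)) r) ≤
      r ^ (q - 1) * x - (Ioc 0 R).indicator (fun r => M * r ^ (q - 1)) r := by
  have hsplit : r ^ (q - 1) = r ^ (q - p) * r ^ (p - 1) := by
    rw [← Real.rpow_add hr, sub_add_sub_cancel]
  have hpos : 0 ≤ r ^ (p - 1) := Real.rpow_nonneg hr.le _
  by_cases hrR : r ≤ R
  · have hmem : r ∈ Ioc 0 R := ⟨hr, hrR⟩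
    simp only [indicator_of_mem hmem, hsplit]
    have hneg : r ^ (p - 1) * x - M * r ^ (p - 1) ≤ 0 := by nlinarith
    calc R ^ (q - p) * (r ^ (p - 1) * x - M * r ^ (p - 1))
        ≤ r ^ (q - p) * (r ^ (p - 1) * x - M * r ^ (p - 1)) :=
          mul_le_mul_of_nonpos_right (Real.rpow_le_rpow hr.le hrR (by linarith)) hneg
      _ = _ := by ring
  · have hmem : r ∉ Ioc 0 R := fun h => hrR h.2
    simp only [indicator_of_notMem hmem, sub_zero, hsplit, mul_assoc]
    exact mul_le_mul_of_nonneg_right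
      (Real.rpow_le_rpow hR (not_le.1 hrR).le (by linarith)) (mul_nonneg hpos hx₀)

lemma integrable_indicator_Ioc_mul_rpow {p : ℝ} (hp : 0 < p) {R : ℝ} (hR : 0 ≤ R) (M : ℝ) :
    Integrable ((Ioc 0 R).indicator fun r : ℝ => M * r ^ (p - 1)) :=
  IntegrableOn.integrable_indicator (Integrable.const_mul (integrableOn_rpow_sub_one_Ioc hp hR) M)
    measurableSet_Ioc

lemma integral_sub_indicator {g : ℝ → ℝ} {M p R : ℝ} (hp : 0 < p) (hR : 0 ≤ R)
    (hg : IntegrableOn (fun r => r ^ (p - 1) * g r) (Ioi 0)) :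
    ∫ r in Ioi 0, (r ^ (p - 1) * g r - (Ioc 0 R).indicator (fun r => M * r ^ (p - 1)) r) =
      (∫ r in Ioi 0, r ^ (p - 1) * g r) - M * (R ^ p / p) := by
  rw [integral_sub hg (integrable_indicator_Ioc_mul_rpow hp hR M).integrableOn,
    setIntegral_indicator measurableSet_Ioc, inter_eq_right.2 Ioc_subset_Ioi_self,
    integral_const_mul, integral_rpow_sub_one_Ioc hp hR]

lemma mul_rpow_le_of_mul_rpow_le {g : ℝ → ℝ} {M p q R : ℝ} (hp : 0 < p) (hpq : p ≤ q)
    (hR : 0 ≤ R) (hg₀ : ∀ r > 0, 0 ≤ g r) (hgM : ∀ r > 0, g r ≤ M)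
    (hgp : IntegrableOn (fun r => r ^ (p - 1) * g r) (Ioi 0))
    (hgq : IntegrableOn (fun r => r ^ (q - 1) * g r) (Ioi 0))
    (h : M * R ^ p ≤ p * ∫ r in Ioi 0, r ^ (p - 1) * g r) :
    M * R ^ q ≤ q * ∫ r in Ioi 0, r ^ (q - 1) * g r := by
  have hq : 0 < q := hp.trans_le hpq
  have hcompare := setIntegral_mono_on
    ((hgp.sub (integrable_indicator_Ioc_mul_rpow hp hR M).integrableOn).const_mul (R ^ (q - p)))
    (hgq.sub (integrable_indicator_Ioc_mul_rpow hq hR M).integrableOn) measurableSet_Ioi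
    fun r hr => rpow_sub_mul_sub_indicator_le hpq hR hr (hg₀ r hr) (hgM r hr)
  simp only [Pi.sub_apply] at hcompare
  rw [integral_const_mul, integral_sub_indicator hp hR hgp, integral_sub_indicator hq hR hgq]
    at hcompare
  have hpmass : 0 ≤ (∫ r in Ioi 0, r ^ (p - 1) * g r) - M * (R ^ p / p) := by
    rw [mul_div_assoc', sub_nonneg, div_le_iff₀ hp]; linarith
  have hqmass : M * (R ^ q / q) ≤ ∫ r in Ioi 0, r ^ (q - 1) * g r := by
    nlinarith [mul_nonneg (Real.rpow_nonneg hR (q - p)) hpmass]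
  rw [mul_div_assoc', div_le_iff₀ hq] at hqmass
  linarith

theorem stmt_13_general (f : ℝ → ℝ) (M : ℝ) (hM : 0 < M)
    (hnn : ∀ r ∈ Ici (0 : ℝ), 0 ≤ f r) (hle : ∀ r ∈ Ici (0 : ℝ), f r ≤ M)
    (p₁ p₂ : ℝ) (hp₁ : 0 < p₁) (hp₁₂ : p₁ ≤ p₂)
    (hint₁ : IntegrableOn (fun r => r ^ (p₁ - 1) * f r) (Ioi 0))
    (hint₂ : IntegrableOn (fun r => r ^ (p₂ - 1) * f r) (Ioi 0)) :
    (p₁ * ∫ r in Ioi (0 : ℝ), r ^ (p₁ - 1) * f r) ^ (1 / p₁) / M ^ (1 / p₁) ≤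
      (p₂ * ∫ r in Ioi (0 : ℝ), r ^ (p₂ - 1) * f r) ^ (1 / p₂) / M ^ (1 / p₂) := by
  set m₁ := p₁ * ∫ r in Ioi (0 : ℝ), r ^ (p₁ - 1) * f r
  set m₂ := p₂ * ∫ r in Ioi (0 : ℝ), r ^ (p₂ - 1) * f r
  have hm₁ : 0 ≤ m₁ := mul_nonneg hp₁.le <|
    setIntegral_nonneg measurableSet_Ioi fun r (hr : 0 < r) =>
      mul_nonneg (Real.rpow_nonneg hr.le _) (hnn r hr.le)
  set R := (m₁ / M) ^ (1 / p₁)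
  have hR : 0 ≤ R := by positivity
  have hRm₁ : M * R ^ p₁ = m₁ := by
    rw [← Real.rpow_mul (by positivity), one_div_mul_cancel hp₁.ne', Real.rpow_one,
      mul_div_cancel₀ _ hM.ne']
  have hRm₂ : M * R ^ p₂ ≤ m₂ := mul_rpow_le_of_mul_rpow_le hp₁ hp₁₂ hR
    (fun r hr => hnn r hr.le) (fun r hr => hle r hr.le) hint₁ hint₂ hRm₁.le
  have hm₂ : 0 ≤ m₂ := le_trans (by positivity) hRm₂
  rw [← Real.div_rpow hm₁ hM.le, ← Real.div_rpow hm₂ hM.le, one_div p₂,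
    Real.le_rpow_inv_iff_of_pos hR (by positivity) (hp₁.trans_le hp₁₂), le_div_iff₀ hM,
    mul_comm]
  exact hRm₂

/-- one-dimensional moment comparison. If `0 ≤ f ≤ M` on `[0,∞)` and
`k_p = (p ∫₀^∞ r^{p-1} f(r) dr)^{1/p}`, then for `0 < p₁ ≤ p₂`,
`k_{p₁}/M^{1/p₁} ≤ k_{p₂}/M^{1/p₂}`. -/
theorem stmt_13 (f : ℝ → ℝ) (hmeas : Measurable f) (M : ℝ) (hM : 0 < M)
    (hnn : ∀ r ∈ Ici (0 : ℝ), 0 ≤ f r) (hle : ∀ r ∈ Ici (0 : ℝ), f r ≤ M)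
    (p₁ p₂ : ℝ) (hp₁ : 0 < p₁) (hp₁₂ : p₁ ≤ p₂)
    (hint₁ : IntegrableOn (fun r => r ^ (p₁ - 1) * f r) (Ioi 0))
    (hint₂ : IntegrableOn (fun r => r ^ (p₂ - 1) * f r) (Ioi 0)) :
    (p₁ * ∫ r in Ioi (0 : ℝ), r ^ (p₁ - 1) * f r) ^ (1 / p₁) / M ^ (1 / p₁) ≤
      (p₂ * ∫ r in Ioi (0 : ℝ), r ^ (p₂ - 1) * f r) ^ (1 / p₂) / M ^ (1 / p₂) :=
  stmt_13_general f M hM hnn hle p₁ p₂ hp₁ hp₁₂ hint₁ hint₂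
end

section
/- Let μ be a probability measure on ℝⁿ with log-concave density f and barycenter at the origin. Then max_{x∈ℝⁿ} f(x) ≤ eⁿ f(0). -/
/-!
The barycenter `0` of `μ = f dx` lies in the interior of the convex support `{f > 0}`, on which
`f ^ (t - 1)` is convex for `0 < t < 1`; Jensen's inequality for `μ` gives
`f 0 ^ (t - 1) ≤ ∫ f ^ t`. Integrating `f z ^ (1 - t) * f y ^ t ≤ f ((1 - t) • z + t • y)` in `y`
gives `f z ^ (1 - t) * ∫ f ^ t ≤ t⁻ⁿ`. Hence `(f z / f 0) ^ (1 - t) ≤ t⁻ⁿ`, and `t → 1` yields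
`f z ≤ eⁿ f 0`.
-/

open MeasureTheory Set Filter Topology Module

section SupportingHyperplane

variable {E : Type*} [AddCommGroup E] [Module ℝ E] [TopologicalSpace E] [IsTopologicalAddGroup E]
  [ContinuousSMul ℝ E] {s : Set E} {g : E → ℝ}

theorem ConvexOn.exists_affine_le_of_isOpen (hg : ConvexOn ℝ s g) (hgc : ContinuousOn g s)
    (hs : IsOpen s) {x₀ : E} (hx₀ : x₀ ∈ s) :
    ∃ l : StrongDual ℝ E, ∀ x ∈ s, g x₀ + l (x - x₀) ≤ g x := by
  set A : Set (E × ℝ) := {p | p.1 ∈ s ∧ g p.1 < p.2}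
  have hAo : IsOpen A := by
    have : A = (s ×ˢ univ) ∩ (fun p : E × ℝ => g p.1 - p.2) ⁻¹' Iio 0 := by
      ext p; simp [A, and_comm]
    rw [this]
    exact ((hgc.comp continuousOn_fst fun p hp => hp.1).sub continuousOn_snd).isOpen_inter_preimage
      (hs.prod isOpen_univ) isOpen_Iio
  obtain ⟨L, hL⟩ := geometric_hahn_banach_open_point hg.convex_strict_epigraph hAo
    (fun h => lt_irrefl _ h.2 : (x₀, g x₀) ∉ A)
  have hsplit : ∀ x r, L (x, r) = L (x, 0) + r * L (0, 1) := fun x r => by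
    rw [← smul_eq_mul, ← L.map_smul, ← map_add, Prod.smul_mk, smul_zero, smul_eq_mul, mul_one,
      Prod.mk_add_mk, add_zero, zero_add]
  set c := L (0, 1)
  have hc : c < 0 := by
    have := hL (x₀, g x₀ + 1) ⟨hx₀, lt_add_one _⟩
    rw [hsplit, hsplit x₀ (g x₀)] at this
    linarith
  refine ⟨(-c)⁻¹ • L.comp (.inl ℝ E ℝ), fun x hx => ?_⟩
  have hsep : L (x, 0) + g x * c ≤ L (x₀, 0) + g x₀ * c := by
    refine le_of_forall_pos_lt_add fun ε hε => ?_
    have := hL (x, g x + ε / -c) ⟨hx, by have := div_pos hε (neg_pos.2 hc); linarith⟩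
    rw [hsplit, hsplit x₀] at this
    have hεc : ε / -c * c = -ε := by field_simp [hc.ne]
    linarith
  have hl : L (x - x₀, 0) = L (x, 0) - L (x₀, 0) := by
    rw [← map_sub, Prod.mk_sub_mk, sub_zero]
  simp only [_root_.smul_apply, ContinuousLinearMap.comp_apply,
    ContinuousLinearMap.inl_apply, smul_eq_mul, hl]
  rw [← le_sub_iff_add_le', inv_mul_le_iff₀ (neg_pos.2 hc)]
  linear_combination hsep

end SupportingHyperplane

section ProbabilityMeasure

variable {α E : Type*} [MeasurableSpace α] {μ : Measure α} [IsProbabilityMeasure μ]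
  [NormedAddCommGroup E] [NormedSpace ℝ E] [CompleteSpace E] {s : Set E} {X : α → E}

theorem Convex.integral_mem_of_isOpen (hs : Convex ℝ s) (hso : IsOpen s)
    (hX : ∀ᵐ a ∂μ, X a ∈ s) (hXi : Integrable X μ) : ∫ a, X a ∂μ ∈ s := by
  by_contra hbar
  obtain ⟨L, hL⟩ := geometric_hahn_banach_open_point hs hso hbar
  have hgap_pos : ∀ᵐ a ∂μ, 0 < L (∫ a, X a ∂μ) - L (X a) := by
    filter_upwards [hX] with a ha using sub_pos.2 (hL _ ha)
  have hgap_int : Integrable (fun a => L (∫ a, X a ∂μ) - L (X a)) μ :=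
    (integrable_const _).sub (L.integrable_comp hXi)
  have hgap_zero : (fun a => L (∫ a, X a ∂μ) - L (X a)) =ᵐ[μ] 0 := by
    refine (integral_eq_zero_iff_of_nonneg_ae (hgap_pos.mono fun _ h => h.le) hgap_int).1 ?_
    rw [integral_sub (integrable_const _) (L.integrable_comp hXi), L.integral_comp_comm hXi]
    simp
  have : ∀ᵐ _ ∂μ, False := by
    filter_upwards [hgap_pos, hgap_zero] with a hpos hzero
    exact hpos.ne' hzero
  exact IsProbabilityMeasure.ne_zero μ (ae_eq_bot.1 (Filter.eventually_false_iff_eq_bot.1 this))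

theorem ConvexOn.map_integral_le_of_isOpen {g : E → ℝ} (hg : ConvexOn ℝ s g)
    (hgc : ContinuousOn g s) (hs : IsOpen s) (hX : ∀ᵐ a ∂μ, X a ∈ s) (hXi : Integrable X μ)
    (hgi : Integrable (g ∘ X) μ) :
    g (∫ a, X a ∂μ) ≤ ∫ a, g (X a) ∂μ := by
  obtain ⟨l, hl⟩ := hg.exists_affine_le_of_isOpen hgc hs (hg.1.integral_mem_of_isOpen hs hX hXi)
  have hXc : Integrable (fun a => X a - ∫ a, X a ∂μ) μ := hXi.sub (integrable_const _)
  have hli : Integrable (fun a => l (X a - ∫ a, X a ∂μ)) μ := l.integrable_comp hXc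
  calc g (∫ a, X a ∂μ)
      = ∫ a, g (∫ a, X a ∂μ) + l (X a - ∫ a, X a ∂μ) ∂μ := by
        rw [integral_add (integrable_const _) hli, l.integral_comp_comm hXc,
          integral_sub hXi (integrable_const _)]
        simp
    _ ≤ ∫ a, g (X a) ∂μ :=
        integral_mono_ae ((integrable_const _).add hli) hgi (hX.mono fun a ha => hl _ ha)

end ProbabilityMeasure

theorem Real.tendsto_log_div_sub_one : Tendsto (fun t => log t / (t - 1)) (𝓝[≠] 1) (𝓝 1) := by
  convert hasDerivAt_iff_tendsto_slope.1 (hasDerivAt_log one_ne_zero) using 1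
  · ext t; simp [slope_def_field]
  · simp

theorem Real.le_exp_mul_of_forall_rpow_mul_rpow_le {a b : ℝ} (n : ℕ) (hb : 0 < b)
    (h : ∀ t ∈ Ioo (0 : ℝ) 1, a ^ (1 - t) * b ^ (t - 1) ≤ (t ^ n)⁻¹) : a ≤ exp n * b := by
  rcases le_or_gt a 0 with ha | ha
  · exact ha.trans (by positivity)
  have hlog : ∀ t ∈ Ioo (0 : ℝ) 1, log a - log b ≤ n * (log t / (t - 1)) := fun t ht => by
    have := log_le_log (by positivity) (h t ht)
    rw [log_mul (by positivity) (by positivity), log_rpow ha, log_rpow hb, log_inv, log_pow] at this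
    rw [mul_div_assoc', le_div_iff_of_neg (by linarith [ht.2])]
    nlinarith [ht.2]
  have hlim : Tendsto (fun t => n * (log t / (t - 1))) (𝓝[<] 1) (𝓝 (n * 1)) :=
    (tendsto_log_div_sub_one.mono_left (nhdsWithin_mono _ fun _ h => ne_of_lt h)).const_mul _
  have hle : log a - log b ≤ n * 1 :=
    ge_of_tendsto hlim (eventually_of_mem (Ioo_mem_nhdsLT zero_lt_one) hlog)
  calc a = exp (log a) := (exp_log ha).symm
    _ ≤ exp (n + log b) := exp_le_exp.2 (by linarith)
    _ = exp n * b := by rw [exp_add, exp_log hb]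

/-- For `f ≥ 0` this is concavity of `log f` with values in `[-∞, ∞)`, because `0 ^ t = 0` for
`t > 0`. -/
def IsLogConcave {E : Type*} [AddCommGroup E] [Module ℝ E] (f : E → ℝ) : Prop :=
  ∀ x y : E, ∀ t ∈ Icc (0 : ℝ) 1, f x ^ t * f y ^ (1 - t) ≤ f (t • x + (1 - t) • y)

namespace IsLogConcave

variable {E : Type*} [AddCommGroup E] [Module ℝ E] {f : E → ℝ}

theorem convex_setOf_pos (hf : IsLogConcave f) : Convex ℝ {x | 0 < f x} := by
  intro x hx y hy a b ha hb hab
  obtain rfl : b = 1 - a := by linarith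
  exact (mul_pos (Real.rpow_pos_of_pos hx a) (Real.rpow_pos_of_pos hy _)).trans_le
    (hf x y a ⟨ha, by linarith⟩)

theorem convexOn_rpow_of_nonpos (hf : IsLogConcave f) {s : ℝ} (hs : s ≤ 0) :
    ConvexOn ℝ {x | 0 < f x} fun x => f x ^ s := by
  refine ⟨hf.convex_setOf_pos, fun x hx y hy a b ha hb hab => ?_⟩
  obtain rfl : b = 1 - a := by linarith
  have hx : 0 < f x := hx
  have hy : 0 < f y := hy
  calc f (a • x + (1 - a) • y) ^ s
      ≤ (f x ^ a * f y ^ (1 - a)) ^ s := Real.rpow_le_rpow_of_nonpos (by positivity)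
        (hf x y a ⟨ha, by linarith⟩) hs
    _ = (f x ^ s) ^ a * (f y ^ s) ^ (1 - a) := by
        rw [Real.mul_rpow (by positivity) (by positivity), ← Real.rpow_mul hx.le,
          ← Real.rpow_mul hy.le, ← Real.rpow_mul hx.le, ← Real.rpow_mul hy.le, mul_comm a,
          mul_comm (1 - a)]
    _ ≤ a • f x ^ s + (1 - a) • f y ^ s :=
        Real.geom_mean_le_arith_mean2_weighted ha hb (by positivity) (by positivity) hab

theorem rpow_one_sub_mul_rpow_le (hf : IsLogConcave f) (z y : E) {t : ℝ} (ht : t ∈ Icc (0 : ℝ) 1) :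
    f z ^ (1 - t) * f y ^ t ≤ f ((1 - t) • z + t • y) := by
  simpa using hf z y (1 - t) ⟨by linarith [ht.2], by linarith [ht.1]⟩

end IsLogConcave

section Haar

variable {E : Type*} [NormedAddCommGroup E] [NormedSpace ℝ E] [FiniteDimensional ℝ E]
  [MeasurableSpace E] [BorelSpace E] (μ : Measure E) [μ.IsAddHaarMeasure]

theorem MeasureTheory.Measure.integral_comp_add_smul {F : Type*} [NormedAddCommGroup F]
    [NormedSpace ℝ F] (f : E → F) (a : E) (t : ℝ) :
    ∫ y, f (a + t • y) ∂μ = |(t ^ finrank ℝ E)⁻¹| • ∫ x, f x ∂μ := by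
  rw [μ.integral_comp_smul (fun y => f (a + y)), integral_add_left_eq_self]

variable {μ} {f : E → ℝ} {t : ℝ}

theorem IsLogConcave.integrable_rpow (hf : IsLogConcave f) (hnn : ∀ x, 0 ≤ f x)
    (hint : Integrable f μ) {z : E} (hz : 0 < f z) (ht : t ∈ Ioc (0 : ℝ) 1) :
    Integrable (fun y => f y ^ t) μ := by
  have hzt : 0 < f z ^ (1 - t) := Real.rpow_pos_of_pos hz _
  refine Integrable.mono' (((hint.comp_add_left ((1 - t) • z)).comp_smul ht.1.ne').div_const
    (f z ^ (1 - t))) ((Real.continuous_rpow_const ht.1.le).comp_aestronglyMeasurable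
    hint.aestronglyMeasurable) (Eventually.of_forall fun y => ?_)
  rw [Real.norm_of_nonneg (Real.rpow_nonneg (hnn y) t), le_div_iff₀' hzt]
  exact hf.rpow_one_sub_mul_rpow_le z y (Ioc_subset_Icc_self ht)

theorem IsLogConcave.rpow_mul_integral_rpow_le (hf : IsLogConcave f) (hnn : ∀ x, 0 ≤ f x)
    (hint : Integrable f μ) {z : E} (hz : 0 < f z) (ht : t ∈ Ioc (0 : ℝ) 1) :
    f z ^ (1 - t) * ∫ y, f y ^ t ∂μ ≤ (t ^ finrank ℝ E)⁻¹ * ∫ x, f x ∂μ := by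
  calc f z ^ (1 - t) * ∫ y, f y ^ t ∂μ = ∫ y, f z ^ (1 - t) * f y ^ t ∂μ :=
        (integral_const_mul _ _).symm
    _ ≤ ∫ y, f ((1 - t) • z + t • y) ∂μ :=
        integral_mono ((hf.integrable_rpow hnn hint hz ht).const_mul _)
          ((hint.comp_add_left ((1 - t) • z)).comp_smul ht.1.ne')
          fun y => hf.rpow_one_sub_mul_rpow_le z y (Ioc_subset_Icc_self ht)
    _ = (t ^ finrank ℝ E)⁻¹ * ∫ x, f x ∂μ := by
        rw [μ.integral_comp_add_smul, smul_eq_mul, abs_of_pos (by have := ht.1; positivity)]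

end Haar

section Density

variable {α : Type*} [MeasurableSpace α] {μ : Measure α} {f : α → ℝ}

theorem isProbabilityMeasure_withDensity_ofReal (hnn : 0 ≤ᵐ[μ] f) (hint : Integrable f μ)
    (hprob : ∫ x, f x ∂μ = 1) :
    IsProbabilityMeasure (μ.withDensity fun x => ENNReal.ofReal (f x)) :=
  ⟨by rw [withDensity_apply _ MeasurableSet.univ, Measure.restrict_univ,
    ← ofReal_integral_eq_lintegral_ofReal hint hnn, hprob, ENNReal.ofReal_one]⟩

variable {F : Type*} [NormedAddCommGroup F] [NormedSpace ℝ F]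

theorem integral_withDensity_ofReal (hnn : 0 ≤ᵐ[μ] f) (hf : AEMeasurable f μ) (g : α → F) :
    ∫ x, g x ∂μ.withDensity (fun x => ENNReal.ofReal (f x)) = ∫ x, f x • g x ∂μ := by
  rw [integral_withDensity_eq_integral_toReal_smul₀ hf.ennreal_ofReal
    (Eventually.of_forall fun _ => ENNReal.ofReal_lt_top)]
  exact integral_congr_ae (hnn.mono fun x hx => by simp only [ENNReal.toReal_ofReal hx])

theorem integrable_withDensity_ofReal_iff (hnn : 0 ≤ᵐ[μ] f) (hf : AEMeasurable f μ) {g : α → F} :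
    Integrable g (μ.withDensity fun x => ENNReal.ofReal (f x)) ↔
      Integrable (fun x => f x • g x) μ := by
  rw [integrable_withDensity_iff_integrable_smul₀' hf.ennreal_ofReal
    (Eventually.of_forall fun _ => ENNReal.ofReal_lt_top)]
  exact integrable_congr (hnn.mono fun x hx => by simp only [ENNReal.toReal_ofReal hx])

end Density

namespace IsLogConcave

variable {E : Type*} [NormedAddCommGroup E] [NormedSpace ℝ E] [FiniteDimensional ℝ E]
  [MeasurableSpace E] [BorelSpace E] {μ : Measure E} [μ.IsAddHaarMeasure] {f : E → ℝ}

theorem ae_withDensity_mem_interior (hf : IsLogConcave f) (hfm : AEMeasurable f μ) :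
    ∀ᵐ x ∂μ.withDensity (fun x => ENNReal.ofReal (f x)), x ∈ interior {x | 0 < f x} := by
  rw [ae_withDensity_iff' hfm.ennreal_ofReal]
  filter_upwards [measure_eq_zero_iff_ae_notMem.1 (hf.convex_setOf_pos.addHaar_frontier μ)]
    with x hx hfx
  by_contra hint
  exact hx ⟨subset_closure (ENNReal.ofReal_pos.1 (pos_iff_ne_zero.2 hfx)), hint⟩

theorem integral_smul_mem_interior (hf : IsLogConcave f) (hnn : ∀ x, 0 ≤ f x)
    (hint : Integrable f μ) (hprob : ∫ x, f x ∂μ = 1) (hbint : Integrable (fun x => f x • x) μ) :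
    ∫ x, f x • x ∂μ ∈ interior {x | 0 < f x} := by
  have := isProbabilityMeasure_withDensity_ofReal (Eventually.of_forall hnn) hint hprob
  rw [← integral_withDensity_ofReal (Eventually.of_forall hnn) hint.aemeasurable]
  exact hf.convex_setOf_pos.interior.integral_mem_of_isOpen isOpen_interior
    (hf.ae_withDensity_mem_interior hint.aemeasurable)
    ((integrable_withDensity_ofReal_iff (Eventually.of_forall hnn) hint.aemeasurable).2 hbint)

theorem rpow_integral_smul_le_integral_rpow (hf : IsLogConcave f) (hnn : ∀ x, 0 ≤ f x)
    (hint : Integrable f μ) (hprob : ∫ x, f x ∂μ = 1) (hbint : Integrable (fun x => f x • x) μ)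
    {t : ℝ} (ht : t ∈ Ioo (0 : ℝ) 1) :
    f (∫ x, f x • x ∂μ) ^ (t - 1) ≤ ∫ x, f x ^ t ∂μ := by
  have := isProbabilityMeasure_withDensity_ofReal (Eventually.of_forall hnn) hint hprob
  have hnn' : 0 ≤ᵐ[μ] f := Eventually.of_forall hnn
  have hbar : 0 < f (∫ x, f x • x ∂μ) :=
    interior_subset (s := {x | 0 < f x}) (hf.integral_smul_mem_interior hnn hint hprob hbint)
  have hmul : ∀ x, f x • f x ^ (t - 1) = f x ^ t := fun x => by
    rw [smul_eq_mul, mul_comm, ← Real.rpow_add_one' (hnn x) (by simp [ht.1.ne']), sub_add_cancel]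
  have hconv := hf.convexOn_rpow_of_nonpos (s := t - 1) (by linarith [ht.2])
  have hjensen := (hconv.subset interior_subset
    hf.convex_setOf_pos.interior).map_integral_le_of_isOpen hconv.continuousOn_interior
    isOpen_interior
    (hf.ae_withDensity_mem_interior hint.aemeasurable)
    ((integrable_withDensity_ofReal_iff hnn' hint.aemeasurable).2 hbint)
    ((integrable_withDensity_ofReal_iff hnn' hint.aemeasurable).2 <| by
      simpa only [Function.comp_apply, id, hmul] using
        hf.integrable_rpow hnn hint hbar ⟨ht.1, ht.2.le⟩)
  simpa only [integral_withDensity_ofReal hnn' hint.aemeasurable, hmul] using hjensen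

end IsLogConcave

/-- Fradelizi: a log-concave probability density `f` on `ℝⁿ` with
barycenter at the origin satisfies `max f ≤ eⁿ f(0)`. -/
theorem stmt_14 (n : ℕ) (f : EuclideanSpace ℝ (Fin n) → ℝ)
    (hnn : ∀ x, 0 ≤ f x) (hint : Integrable f) (hprob : ∫ x, f x = 1)
    (hlc : ∀ x y : EuclideanSpace ℝ (Fin n), ∀ t ∈ Icc (0 : ℝ) 1,
      f x ^ t * f y ^ (1 - t) ≤ f (t • x + (1 - t) • y))
    (hbint : Integrable fun x => f x • x)
    (hbar : ∫ x, f x • x = (0 : EuclideanSpace ℝ (Fin n))) :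
    ∀ x, f x ≤ Real.exp n * f 0 := by
  have hf : IsLogConcave f := hlc
  intro z
  rcases (hnn z).eq_or_lt with hz | hz
  · rw [← hz]
    exact mul_nonneg (Real.exp_pos _).le (hnn 0)
  have h0 : 0 < f 0 := by
    simpa [hbar] using interior_subset (hf.integral_smul_mem_interior hnn hint hprob hbint)
  refine Real.le_exp_mul_of_forall_rpow_mul_rpow_le n h0 fun t ht => ?_
  calc f z ^ (1 - t) * f 0 ^ (t - 1) ≤ f z ^ (1 - t) * ∫ x, f x ^ t := by
        gcongr
        simpa [hbar] using hf.rpow_integral_smul_le_integral_rpow hnn hint hprob hbint ht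
    _ ≤ (t ^ n)⁻¹ := by
        simpa [hprob] using hf.rpow_mul_integral_rpow_le hnn hint hz ⟨ht.1, ht.2.le⟩
end
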